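/- Let r ≤ n and let S : M_r(ℂ) → M_n(ℂ) be the corner embedding sending a ∈ M_r(ℂ) to the n×n matrix having a as its top-left r×r block and zeros elsewhere. Then the kernel of the linear map Ŝ : M_r(ℂ)⊗ℂ^n → ℂ^n determined by a⊗η ↦ S(a)η equals the linear span N_S of the simple tensors a⊗η with a positive semidefinite and S(a)η = 0; equivalently, dim N_S = r²n − r. -/

import Mathlib

open Matrix ComplexOrder

noncomputable section

/-- A linear map between matrix algebras is positive if it sends positive
semidefinite matrices to positive semidefinite matrices. -/
def IsPosMap {m n : ℕ} (φ : Matrix (Fin m) (Fin m) ℂ →ₗ[ℂ] Matrix (Fin n) (Fin n) ℂ) : Prop :=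
  ∀ a : Matrix (Fin m) (Fin m) ℂ, a.PosSemidef → (φ a).PosSemidef

/-- A positive linear map `φ` is exposed (generates an exposed ray of the cone of
positive maps) if every positive map `ψ` such that `⟨η, φ(a) η⟩ = 0` implies
`⟨η, ψ(a) η⟩ = 0` (for `a` positive semidefinite) is a nonnegative multiple of `φ`. -/
def IsExposedMap {m n : ℕ} (φ : Matrix (Fin m) (Fin m) ℂ →ₗ[ℂ] Matrix (Fin n) (Fin n) ℂ) :
    Prop :=
  IsPosMap φ ∧
    ∀ ψ : Matrix (Fin m) (Fin m) ℂ →ₗ[ℂ] Matrix (Fin n) (Fin n) ℂ, IsPosMap ψ →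
      (∀ a : Matrix (Fin m) (Fin m) ℂ, a.PosSemidef → ∀ η : Fin n → ℂ,
        star η ⬝ᵥ (φ a) *ᵥ η = 0 → star η ⬝ᵥ (ψ a) *ᵥ η = 0) →
      ∃ c : ℝ, 0 ≤ c ∧ ψ = (c : ℂ) • φ

/-- The map `Ad_s : x ↦ s* x s`. -/
def adMap {m n : ℕ} (s : Matrix (Fin m) (Fin n) ℂ) :
    Matrix (Fin m) (Fin m) ℂ →ₗ[ℂ] Matrix (Fin n) (Fin n) ℂ where
  toFun x := sᴴ * x * s
  map_add' x y := by simp [Matrix.add_mul, Matrix.mul_add]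
  map_smul' c x := by simp [Matrix.smul_mul, Matrix.mul_smul]

/-- The transpose map on matrices, as a linear map. -/
def transposeLM (m : ℕ) : Matrix (Fin m) (Fin m) ℂ →ₗ[ℂ] Matrix (Fin m) (Fin m) ℂ where
  toFun x := xᵀ
  map_add' x y := Matrix.transpose_add x y
  map_smul' c x := by simp

/-- Woronowicz's map `φ̂ : M_m(ℂ) ⊗ ℂ^n → ℂ^n`, determined by `a ⊗ η ↦ φ(a) η`. -/
def hatMap {m n : ℕ} (φ : Matrix (Fin m) (Fin m) ℂ →ₗ[ℂ] Matrix (Fin n) (Fin n) ℂ) :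
    TensorProduct ℂ (Matrix (Fin m) (Fin m) ℂ) (Fin n → ℂ) →ₗ[ℂ] (Fin n → ℂ) :=
  TensorProduct.lift (Matrix.toLin'.toLinearMap.comp φ)

/-- The subspace `N_φ ⊆ M_m(ℂ) ⊗ ℂ^n` spanned by the simple tensors `a ⊗ η`
with `a` positive semidefinite and `φ(a) η = 0`. -/
def Nspace {m n : ℕ} (φ : Matrix (Fin m) (Fin m) ℂ →ₗ[ℂ] Matrix (Fin n) (Fin n) ℂ) :
    Submodule ℂ (TensorProduct ℂ (Matrix (Fin m) (Fin m) ℂ) (Fin n → ℂ)) :=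
  Submodule.span ℂ
    {x | ∃ (a : Matrix (Fin m) (Fin m) ℂ) (η : Fin n → ℂ),
      a.PosSemidef ∧ (φ a) *ᵥ η = 0 ∧ x = a ⊗ₜ[ℂ] η}

/-- The corner embedding `S : M_r(ℂ) → M_n(ℂ)` placing `a` as the top-left `r × r`
block and zeros elsewhere. -/
def cornerEmbed {r n : ℕ} (h : r ≤ n) :
    Matrix (Fin r) (Fin r) ℂ →ₗ[ℂ] Matrix (Fin n) (Fin n) ℂ where
  toFun a := Matrix.of fun i j =>
    if hi : (i : ℕ) < r then if hj : (j : ℕ) < r then a ⟨i, hi⟩ ⟨j, hj⟩ else 0 else 0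
  map_add' x y := by
    ext i j
    by_cases hi : (i : ℕ) < r <;> by_cases hj : (j : ℕ) < r <;> simp [hi, hj]
  map_smul' c x := by
    ext i j
    by_cases hi : (i : ℕ) < r <;> by_cases hj : (j : ℕ) < r <;> simp [hi, hj]

/-!
Always `N_S ≤ ker Ŝ`, and `Ŝ` followed by restriction to the first `r` coordinates maps onto
`ℂ^r`, so `dim ker Ŝ ≤ r²n - r`. Conversely, `N_S` together with the `r` tensors
`E_xx ⊗ e_x` spans everything. The generators of `N_S` used are `u u* ⊗ η` with `u`
orthogonal to the first `r` coordinates of `η`; taking `u = q + s p` and `η - s̄ ζ` for the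
fourth roots of unity `s` and averaging puts `p q* ⊗ η` into `N_S` as soon as `q ⊥ η`,
`p ⊥ ζ` and `⟨p, η⟩ = ⟨q, ζ⟩` (on the first `r` coordinates). This covers every matrix unit
tensor `E_xy ⊗ e_k` with `k ≠ y`, and `E_xy ⊗ e_y - E_xx ⊗ e_x` for `x ≠ y`.
-/

open TensorProduct

section HatMap

variable {m n : ℕ} (φ : Matrix (Fin m) (Fin m) ℂ →ₗ[ℂ] Matrix (Fin n) (Fin n) ℂ)

@[simp]
lemma hatMap_tmul (a : Matrix (Fin m) (Fin m) ℂ) (η : Fin n → ℂ) :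
    hatMap φ (a ⊗ₜ[ℂ] η) = φ a *ᵥ η := by
  simp [hatMap, Matrix.toLin'_apply]

lemma Nspace_le_ker_hatMap : Nspace φ ≤ LinearMap.ker (hatMap φ) := by
  rw [Nspace, Submodule.span_le]
  rintro _ ⟨a, η, -, hzero, rfl⟩
  simp [hzero]

lemma vecMulVec_self_star_tmul_mem_Nspace {v : Fin m → ℂ} {η : Fin n → ℂ}
    (hv : φ (vecMulVec v (star v)) *ᵥ η = 0) : vecMulVec v (star v) ⊗ₜ[ℂ] η ∈ Nspace φ :=
  Submodule.subset_span ⟨_, _, posSemidef_vecMulVec_self_star v, hv, rfl⟩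

end HatMap

-- Averaging over the fourth roots of unity `s` with weight `s̄` keeps only the
-- coefficient of `s` in the expansion of the summand, which is `p q* ⊗ η`.
lemma smul_vecMulVec_star_tmul_eq_sum {ι M : Type*} [AddCommGroup M] [Module ℂ M]
    (p q : ι → ℂ) (η ζ : M) :
    (4 : ℂ) • (vecMulVec p (star q) ⊗ₜ[ℂ] η) =
      ∑ k ∈ Finset.range 4, star (Complex.I ^ k) • (vecMulVec (q + Complex.I ^ k • p)
        (star (q + Complex.I ^ k • p)) ⊗ₜ[ℂ] (η - star (Complex.I ^ k) • ζ)) := by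
  simp only [Finset.sum_range_succ, Finset.sum_range_zero, zero_add, pow_zero, pow_succ,
    star_add, star_smul, add_vecMulVec, vecMulVec_add, smul_vecMulVec,
    vecMulVec_smul, add_tmul, tmul_sub, ← smul_tmul', tmul_smul]
  simp only [one_mul, Complex.I_mul_I, star_one, star_neg, star_mul', Complex.star_def,
    Complex.conj_I]
  match_scalars <;> norm_num [Complex.ext_iff]

lemma finrank_matrix_tensorProduct_fun (r n : ℕ) :
    Module.finrank ℂ (Matrix (Fin r) (Fin r) ℂ ⊗[ℂ] (Fin n → ℂ)) = r ^ 2 * n := by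
  simp [Module.finrank_tensorProduct, Module.finrank_matrix, sq]

section Corner

variable {r n : ℕ} (h : r ≤ n)

lemma cornerEmbed_mulVec_apply (a : Matrix (Fin r) (Fin r) ℂ) (η : Fin n → ℂ) (i : Fin n) :
    (cornerEmbed h a *ᵥ η) i =
      if hi : (i : ℕ) < r then (a *ᵥ (η ∘ Fin.castLE h)) ⟨i, hi⟩ else 0 := by
  split_ifs with hi
  · refine (Fintype.sum_of_injective (Fin.castLE h) (Fin.castLE_injective h) _ _ ?_ ?_).symm
    · rintro k hk
      have : ¬ (k : ℕ) < r := fun hk' => hk ⟨⟨k, hk'⟩, rfl⟩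
      simp [cornerEmbed, hi, this]
    · intro k
      simp [cornerEmbed, hi]
  · simp [Matrix.mulVec, dotProduct, cornerEmbed, hi]

lemma cornerEmbed_mulVec_comp_castLE (a : Matrix (Fin r) (Fin r) ℂ) (η : Fin n → ℂ) :
    (cornerEmbed h a *ᵥ η) ∘ Fin.castLE h = a *ᵥ (η ∘ Fin.castLE h) := by
  ext j
  simp [cornerEmbed_mulVec_apply]

lemma cornerEmbed_mulVec_eq_zero {a : Matrix (Fin r) (Fin r) ℂ} {η : Fin n → ℂ}
    (ha : a *ᵥ (η ∘ Fin.castLE h) = 0) : cornerEmbed h a *ᵥ η = 0 := by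
  ext i
  simp [cornerEmbed_mulVec_apply, ha]

lemma vecMulVec_star_tmul_mem_Nspace_cornerEmbed {p q : Fin r → ℂ} {η ζ : Fin n → ℂ}
    (hqη : star q ⬝ᵥ (η ∘ Fin.castLE h) = 0) (hpζ : star p ⬝ᵥ (ζ ∘ Fin.castLE h) = 0)
    (hpη : star p ⬝ᵥ (η ∘ Fin.castLE h) = star q ⬝ᵥ (ζ ∘ Fin.castLE h)) :
    vecMulVec p (star q) ⊗ₜ[ℂ] η ∈ Nspace (cornerEmbed h) := by
  have hmem : ∀ s : ℂ, vecMulVec (q + s • p) (star (q + s • p)) ⊗ₜ[ℂ] (η - star s • ζ)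
      ∈ Nspace (cornerEmbed h) := by
    intro s
    refine vecMulVec_self_star_tmul_mem_Nspace _ (cornerEmbed_mulVec_eq_zero h ?_)
    have horth : star (q + s • p) ⬝ᵥ (η - star s • ζ) ∘ Fin.castLE h = 0 := by
      change star (q + s • p) ⬝ᵥ (η ∘ Fin.castLE h - star s • (ζ ∘ Fin.castLE h)) = 0
      simp only [star_add, star_smul, add_dotProduct, dotProduct_sub, smul_dotProduct,
        dotProduct_smul, hqη, hpζ, hpη, smul_eq_mul]
      ring
    rw [vecMulVec_mulVec, horth, MulOpposite.op_zero, zero_smul]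
  have h4 : (4 : ℂ) • (vecMulVec p (star q) ⊗ₜ[ℂ] η) ∈ Nspace (cornerEmbed h) := by
    rw [smul_vecMulVec_star_tmul_eq_sum p q η ζ]
    exact Submodule.sum_mem _ fun k _ => Submodule.smul_mem _ _ (hmem _)
  exact (Submodule.smul_mem_iff _ four_ne_zero).1 h4

lemma single_tmul_mem_Nspace_cornerEmbed {x y : Fin r} {η ζ : Fin n → ℂ}
    (hη : η (Fin.castLE h y) = 0) (hζ : ζ (Fin.castLE h x) = 0)
    (hηζ : η (Fin.castLE h x) = ζ (Fin.castLE h y)) :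
    Matrix.single x y (1 : ℂ) ⊗ₜ[ℂ] η ∈ Nspace (cornerEmbed h) := by
  rw [single_eq_single_vecMulVec_single,
    show (Pi.single y 1 : Fin r → ℂ) = star (Pi.single y 1) by simp]
  exact vecMulVec_star_tmul_mem_Nspace_cornerEmbed h (by simpa) (by simpa) (by simpa)

lemma single_tmul_single_mem_Nspace_cornerEmbed {x y : Fin r} {k : Fin n}
    (hk : k ≠ Fin.castLE h y) :
    Matrix.single x y (1 : ℂ) ⊗ₜ[ℂ] Pi.single k (1 : ℂ) ∈ Nspace (cornerEmbed h) := by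
  by_cases hkx : k = Fin.castLE h x
  · subst hkx
    exact single_tmul_mem_Nspace_cornerEmbed h (ζ := (Pi.single (Fin.castLE h y) 1 : Fin n → ℂ))
      (Pi.single_eq_of_ne' hk 1) (Pi.single_eq_of_ne hk 1) (by simp)
  · exact single_tmul_mem_Nspace_cornerEmbed h (ζ := 0)
      (Pi.single_eq_of_ne' hk 1) rfl (by simp [Pi.single_eq_of_ne' hkx])

lemma single_tmul_single_castLE_sub_mem_Nspace_cornerEmbed {x y : Fin r} (hxy : x ≠ y) :
    Matrix.single x y (1 : ℂ) ⊗ₜ[ℂ] (Pi.single (Fin.castLE h y) 1 : Fin n → ℂ) -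
        Matrix.single x x (1 : ℂ) ⊗ₜ[ℂ] (Pi.single (Fin.castLE h x) 1 : Fin n → ℂ) ∈
      Nspace (cornerEmbed h) := by
  have hxy' : Fin.castLE h x ≠ Fin.castLE h y := (Fin.castLE_injective h).ne hxy
  have hmain : vecMulVec (Pi.single x 1) (star (Pi.single y 1 - Pi.single x 1 : Fin r → ℂ)) ⊗ₜ[ℂ]
      (Pi.single (Fin.castLE h x) 1 + Pi.single (Fin.castLE h y) 1 : Fin n → ℂ) ∈
        Nspace (cornerEmbed h) :=
    vecMulVec_star_tmul_mem_Nspace_cornerEmbed h (ζ := (Pi.single (Fin.castLE h y) 1 : Fin n → ℂ))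
      (by simp [hxy, hxy.symm]) (by simp [hxy']) (by simp [hxy'])
  have hsplit : Matrix.single x y (1 : ℂ) ⊗ₜ[ℂ] (Pi.single (Fin.castLE h y) 1 : Fin n → ℂ) -
      Matrix.single x x (1 : ℂ) ⊗ₜ[ℂ] (Pi.single (Fin.castLE h x) 1 : Fin n → ℂ) =
      vecMulVec (Pi.single x 1) (star (Pi.single y 1 - Pi.single x 1 : Fin r → ℂ)) ⊗ₜ[ℂ]
          (Pi.single (Fin.castLE h x) 1 + Pi.single (Fin.castLE h y) 1 : Fin n → ℂ) -
        Matrix.single x y (1 : ℂ) ⊗ₜ[ℂ] (Pi.single (Fin.castLE h x) 1 : Fin n → ℂ) +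
        Matrix.single x x (1 : ℂ) ⊗ₜ[ℂ] (Pi.single (Fin.castLE h y) 1 : Fin n → ℂ) := by
    simp only [star_sub, Pi.star_single, star_one, vecMulVec_sub,
      ← single_eq_single_vecMulVec_single, sub_tmul, tmul_add]
    abel
  rw [hsplit]
  exact add_mem (sub_mem hmain (single_tmul_single_mem_Nspace_cornerEmbed h hxy'))
    (single_tmul_single_mem_Nspace_cornerEmbed h hxy'.symm)

def cornerDiagSpan : Submodule ℂ (Matrix (Fin r) (Fin r) ℂ ⊗[ℂ] (Fin n → ℂ)) :=
  Submodule.span ℂ (Set.range fun x : Fin r =>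
    Matrix.single x x (1 : ℂ) ⊗ₜ[ℂ] (Pi.single (Fin.castLE h x) 1 : Fin n → ℂ))

lemma finrank_cornerDiagSpan_le : Module.finrank ℂ (cornerDiagSpan h) ≤ r :=
  (finrank_range_le_card _).trans_eq (Fintype.card_fin r)

lemma Nspace_cornerEmbed_sup_cornerDiagSpan_eq_top :
    Nspace (cornerEmbed h) ⊔ cornerDiagSpan h = ⊤ := by
  have hW (x : Fin r) :
      Matrix.single x x (1 : ℂ) ⊗ₜ[ℂ] (Pi.single (Fin.castLE h x) 1 : Fin n → ℂ) ∈
        cornerDiagSpan h :=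
    Submodule.subset_span ⟨x, rfl⟩
  rw [eq_top_iff, ← ((Matrix.stdBasis ℂ (Fin r) (Fin r)).tensorProduct
    (Pi.basisFun ℂ (Fin n))).span_eq, Submodule.span_le]
  rintro _ ⟨⟨⟨x, y⟩, k⟩, rfl⟩
  simp only [Module.Basis.tensorProduct_apply, stdBasis_eq_single, Pi.basisFun_apply]
  by_cases hk : k = Fin.castLE h y
  · subst hk
    by_cases hxy : x = y
    · subst hxy
      exact Submodule.mem_sup_right (hW x)
    · simpa using add_mem
        (Submodule.mem_sup_left (single_tmul_single_castLE_sub_mem_Nspace_cornerEmbed h hxy))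
        (Submodule.mem_sup_right (hW x))
  · exact Submodule.mem_sup_left (single_tmul_single_mem_Nspace_cornerEmbed h hk)

lemma finrank_ker_hatMap_cornerEmbed_add_le :
    Module.finrank ℂ (LinearMap.ker (hatMap (cornerEmbed h))) + r ≤ r ^ 2 * n := by
  set ρ := LinearMap.funLeft ℂ ℂ (Fin.castLE h)
  have hsurj : Function.Surjective (ρ ∘ₗ hatMap (cornerEmbed h)) := by
    intro ξ
    obtain ⟨η, rfl⟩ := LinearMap.funLeft_surjective_of_injective ℂ ℂ _ (Fin.castLE_injective h) ξ
    exact ⟨1 ⊗ₜ[ℂ] η, by simp [ρ, LinearMap.funLeft, cornerEmbed_mulVec_comp_castLE]⟩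
  have hrank := LinearMap.finrank_range_add_finrank_ker (ρ ∘ₗ hatMap (cornerEmbed h))
  rw [LinearMap.range_eq_top.2 hsurj, finrank_top, Module.finrank_fin_fun,
    finrank_matrix_tensorProduct_fun] at hrank
  have hle := Submodule.finrank_mono (LinearMap.ker_le_ker_comp (hatMap (cornerEmbed h)) ρ)
  omega

lemma sq_mul_le_finrank_Nspace_cornerEmbed_add :
    r ^ 2 * n ≤ Module.finrank ℂ (Nspace (cornerEmbed h)) + r := by
  calc r ^ 2 * n = Module.finrank ℂ ↥(Nspace (cornerEmbed h) ⊔ cornerDiagSpan h) := by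
        rw [Nspace_cornerEmbed_sup_cornerDiagSpan_eq_top, finrank_top,
          finrank_matrix_tensorProduct_fun]
    _ ≤ Module.finrank ℂ (Nspace (cornerEmbed h)) + Module.finrank ℂ (cornerDiagSpan h) :=
        Submodule.finrank_add_le_finrank_add_finrank _ _
    _ ≤ Module.finrank ℂ (Nspace (cornerEmbed h)) + r := by
        grw [finrank_cornerDiagSpan_le]

end Corner

/-- For `r ≤ n` and the corner embedding `S : M_r(ℂ) → M_n(ℂ)`, the kernel of
`Ŝ : M_r(ℂ) ⊗ ℂ^n → ℂ^n` equals the span `N_S` of the simple tensors `a ⊗ η` with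
`a` positive semidefinite and `S(a) η = 0`; equivalently, `dim N_S = r² n - r`. -/
theorem ker_hatMap_cornerEmbed_eq_Nspace {r n : ℕ} (h : r ≤ n) :
    LinearMap.ker (hatMap (cornerEmbed h)) = Nspace (cornerEmbed h) ∧
    Module.finrank ℂ (Nspace (cornerEmbed h)) = r ^ 2 * n - r := by
  have hle := Nspace_le_ker_hatMap (cornerEmbed h)
  have hker := finrank_ker_hatMap_cornerEmbed_add_le h
  have hN := sq_mul_le_finrank_Nspace_cornerEmbed_add h
  have hmono := Submodule.finrank_mono hle
  exact ⟨(Submodule.eq_of_le_of_finrank_le hle (by omega)).symm, by omega⟩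

end
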